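/- Let L be a finite atomic meet-semilattice and G a building set in L. Then the nested set complex N(L,G) is homeomorphic (as a simplicial complex, via its geometric realization) to the order complex Δ(L \ {0̂}). -/

import Mathlib

open scoped BigOperators

variable {L : Type*}

/-- The set of maximal elements of `G` below `X` (the `G`-factors of `X`). -/
def factorsSet [PartialOrder L] (G : Set L) (X : L) : Set L :=
  {g | g ∈ G ∧ g ≤ X ∧ ∀ h ∈ G, h ≤ X → g ≤ h → g = h}

/-- `G` is a building set in the meet-semilattice `L` with minimal element `⊥`:
every element of `G` is nonminimal, and for every `X ≠ ⊥` there is a poset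
isomorphism from the product of the lower intervals of the factors of `X`
to the lower interval of `X`, sending the `g`-th "unit vector" to `g`. -/
def IsBuilding (L : Type*) [PartialOrder L] [OrderBot L] (G : Set L) : Prop :=
  (∀ g ∈ G, g ≠ ⊥) ∧
  ∀ X : L, X ≠ ⊥ →
    ∃ φ : ((g : factorsSet G X) → Set.Icc (⊥ : L) g.1) ≃o Set.Icc (⊥ : L) X,
      ∀ (g : factorsSet G X) (u : (h : factorsSet G X) → Set.Icc (⊥ : L) h.1),
        (u g : L) = g.1 → (∀ h, h ≠ g → (u h : L) = (⊥ : L)) → ((φ u : L) = g.1)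

/-- A finite subset `S ⊆ G` is nested: every antichain in `S` of size at least 2
has a least upper bound in `L` which does not belong to `G`. -/
def IsNested [PartialOrder L] (G : Set L) (S : Finset L) : Prop :=
  ↑S ⊆ G ∧ ∀ A : Finset L, A ⊆ S → IsAntichain (· ≤ ·) (A : Set L) → 2 ≤ A.card →
    ∃ j, IsLUB (A : Set L) j ∧ j ∉ G

/-- The nested set complex, as the collection of its faces. -/
def nestedComplex [PartialOrder L] (G : Set L) : Set (Finset L) := {S | IsNested G S}

/-- The order complex of a poset: the collection of finite chains. -/
def chainComplex (V : Type*) [Preorder V] : Set (Finset V) :=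
  {S | IsChain (· ≤ ·) (S : Set V)}

/-- The order complex of `L \ {⊥}`, with vertex set inside `L`. -/
def orderComplexBot (L : Type*) [PartialOrder L] [OrderBot L] : Set (Finset L) :=
  {S | (S : Set L) ⊆ {x | x ≠ ⊥} ∧ IsChain (· ≤ ·) (S : Set L)}

/-- Geometric realization of an abstract simplicial complex (given by its set of
faces, as finsets of the vertex type `V`): convex combinations of vertices
supported on a face. -/
abbrev geomReal {V : Type*} (K : Set (Finset V)) : Type _ :=
  {f : V → ℝ // (∀ v, 0 ≤ f v) ∧ ∃ s ∈ K, (∀ v, f v ≠ 0 → v ∈ s) ∧ ∑ v ∈ s, f v = 1}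

/-- The subposet of the face poset of the nested set complex consisting of the
nonempty nested sets whose join is `≤ X`. -/
def NestedFiber [PartialOrder L] (G : Set L) (X : L) :=
  {S : Finset L // IsNested G S ∧ S.Nonempty ∧ ∃ j, IsLUB (S : Set L) j ∧ j ≤ X}

instance [PartialOrder L] (G : Set L) (X : L) : PartialOrder (NestedFiber G X) := by
  unfold NestedFiber; infer_instance

/-- The face poset of the nested set complex: nonempty nested sets ordered by inclusion. -/
def NestedFaces [PartialOrder L] (G : Set L) :=
  {S : Finset L // IsNested G S ∧ S.Nonempty}

instance [PartialOrder L] (G : Set L) : PartialOrder (NestedFaces G) := by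
  unfold NestedFaces; infer_instance

/-- The combinatorial blowup of a poset `M` at `X`: elements `Y` (marked `false`)
with `Y ≱ X`, and elements `Ŷ` (marked `true`) with `Y ≱ X` such that `Y ∨ X`
exists; ordered by `Y ≺ Z` iff `Y < Z`, `Ŷ ≺ Ẑ` iff `Y < Z`, `Y ≺ Ẑ` iff `Y ≤ Z`. -/
def Bl {M : Type*} [PartialOrder M] (X : M) :=
  {p : M × Bool // ¬ X ≤ p.1 ∧ (p.2 = true → ∃ j, IsLUB {p.1, X} j)}

noncomputable instance {M : Type*} [PartialOrder M] (X : M) : PartialOrder (Bl X) := by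
  unfold Bl; infer_instance

/-- The atoms of `L`, used as coordinates for the realization of nested set fans. -/
def Atoms (L : Type*) [PartialOrder L] [OrderBot L] := {a : L // IsAtom a}

open Classical in
/-- The characteristic vector of the set of atoms below `X`. -/
noncomputable def charVec [PartialOrder L] [OrderBot L] (X : L) : Atoms L → ℝ :=
  fun a => if a.1 ≤ X then 1 else 0

/-- The polyhedral cone spanned by the characteristic vectors of elements of `S`. -/
noncomputable def coneOf [PartialOrder L] [OrderBot L] (S : Finset L) : Set (Atoms L → ℝ) :=
  {y | ∃ c : L → ℝ, (∀ x, 0 ≤ c x) ∧ y = ∑ x ∈ S, c x • charVec x}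

/-- The fan associated to a building set: the cones spanned by the nested sets. -/
def fanOf [PartialOrder L] [OrderBot L] (G : Set L) : Set (Set (Atoms L → ℝ)) :=
  {C | ∃ S : Finset L, IsNested G S ∧ C = coneOf S}

/-- The cone generated by a ray `v` together with a cone `c`. -/
def rayJoin {E : Type*} [AddCommMonoid E] [Module ℝ E] (v : E) (c : Set E) : Set E :=
  {y | ∃ a : ℝ, ∃ x ∈ c, 0 ≤ a ∧ y = a • v + x}

/-- The stellar subdivision of a fan `F` at the cone `σ` with new ray `v`:
cones not containing `σ` are kept, and each cone `τ ⊇ σ` is replaced by the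
joins of `v` with the faces of `τ` not containing `σ`. -/
def stellarSub {E : Type*} [AddCommMonoid E] [Module ℝ E]
    (F : Set (Set E)) (σ : Set E) (v : E) : Set (Set E) :=
  {τ | τ ∈ F ∧ ¬ σ ⊆ τ} ∪
  {D | ∃ τ ∈ F, σ ⊆ τ ∧ ∃ c ∈ F, c ⊆ τ ∧ ¬ σ ⊆ c ∧ D = rayJoin v c}


/-!
Send a vertex `X` of `Δ(L ∖ {⊥})` to the barycenter of the simplex of `N(L, G)` spanned by the
`G`-factors `F(X)` of `X`, and extend linearly (`subdivisionMap`). Along a chain the union of the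
factor sets is nested, so this maps the realization of the order complex into that of the nested
set complex; a continuous bijection from a compact space, it is a homeomorphism.

The building-set axiom enters through one fact: a nested set `S` has a join `X`, and `F(X)` is the
set of maximal elements of `S`. For surjectivity, subtract from a point `c` supported on `S` the
largest multiple of the barycenter of `F(X)` that keeps it nonnegative; this kills a coordinate, so
by induction the remainder is the image of a weighting of a chain below `X`, to which `X` is added.
For injectivity, the top `M` of the chain is the join of the support of the image, and its weight is
`#F(M) · min_{g ∈ F(M)} c g`, attained at a factor of `M` that is a factor of no smaller element of
the chain.
-/

attribute [local instance] Classical.propDecidable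

open Function

theorem IsChain.exists_isGreatest_of_finite {α : Type*} [Preorder α] {s : Set α}
    (hs : IsChain (· ≤ ·) s) (hfin : s.Finite) (hne : s.Nonempty) : ∃ M, IsGreatest s M := by
  obtain ⟨M, hM⟩ := hfin.exists_maximal hne
  exact ⟨M, hM.prop, fun y hy => (hs.total hy hM.prop).elim id (hM.le_of_ge hy)⟩

theorem exists_isLUB_of_bddAbove {α : Type*} [SemilatticeInf α] [Finite α] {s : Set α}
    (hs : BddAbove s) : ∃ j, IsLUB s j := by
  have := Fintype.ofFinite α
  obtain ⟨X, hX⟩ := hs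
  let ubs : Finset α := {u | u ∈ upperBounds s}
  have hne : ubs.Nonempty := ⟨X, by simpa [ubs] using hX⟩
  refine ⟨ubs.inf' hne id, fun a ha => Finset.le_inf' hne id fun u hu => ?_,
    fun u hu => Finset.inf'_le id (by simpa [ubs] using hu)⟩
  exact (Finset.mem_filter.mp hu).2 ha

theorem Finset.upperBounds_filter_maximal {α : Type*} [Preorder α] (s : Finset α) :
    upperBounds (↑{x ∈ s | Maximal (· ∈ s) x} : Set α) = upperBounds (s : Set α) := by
  refine Set.Subset.antisymm (fun u hu a ha => ?_) (upperBounds_mono_set fun x hx => ?_)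
  · obtain ⟨b, hab, hb⟩ := s.exists_le_maximal ha
    exact hab.trans (hu (by simpa using ⟨hb.prop, hb⟩))
  · exact (Finset.mem_filter.mp hx).1

theorem exists_mem_factorsSet_ge [PartialOrder L] [Finite L] {G : Set L} {X a : L}
    (ha : a ∈ G) (haX : a ≤ X) : ∃ h ∈ factorsSet G X, a ≤ h := by
  obtain ⟨h, hah, hmax⟩ := (Set.toFinite {h | h ∈ G ∧ h ≤ X}).exists_le_maximal ⟨ha, haX⟩
  exact ⟨h, ⟨hmax.prop.1, hmax.prop.2, fun k hk hkX hhk => hmax.eq_of_le ⟨hk, hkX⟩ hhk⟩, hah⟩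

section Product

variable [PartialOrder L] [OrderBot L] {G : Set L} {X : L}

abbrev FactorProduct (G : Set L) (X : L) := (g : factorsSet G X) → Set.Icc (⊥ : L) g.1

namespace FactorProduct

noncomputable def unitVec (g : factorsSet G X) : FactorProduct G X :=
  fun h => ⟨if h = g then h.1 else ⊥, bot_le, by split_ifs <;> simp⟩

theorem unitVec_le_iff {g : factorsSet G X} {v : FactorProduct G X} :
    unitVec g ≤ v ↔ (v g : L) = g := by
  refine ⟨fun h => le_antisymm (v g).2.2 (by simpa [unitVec] using Subtype.coe_le_coe.mpr (h g)),
    fun h k => ?_⟩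
  by_cases hk : k = g
  · subst hk
    exact Subtype.coe_le_coe.mp (by simp [unitVec, h])
  · exact Subtype.coe_le_coe.mp (by simp [unitVec, hk])

variable {φ : FactorProduct G X ≃o Set.Icc (⊥ : L) X} {y : Set.Icc (⊥ : L) X}
  {g h : factorsSet G X}

theorem symm_le_unitVec_iff (hφ : ∀ g, (φ (unitVec g) : L) = g) :
    φ.symm y ≤ unitVec g ↔ (y : L) ≤ g := by
  rw [OrderIso.symm_apply_le, ← Subtype.coe_le_coe, hφ]

theorem coe_symm_apply_eq_iff (hφ : ∀ g, (φ (unitVec g) : L) = g) :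
    (φ.symm y g : L) = g ↔ (g : L) ≤ y := by
  rw [← unitVec_le_iff, OrderIso.le_symm_apply, ← Subtype.coe_le_coe, hφ]

theorem coe_symm_apply_eq_bot (hφ : ∀ g, (φ (unitVec g) : L) = g) (hy : (y : L) ≤ g)
    (hhg : h ≠ g) : (φ.symm y h : L) = ⊥ :=
  le_bot_iff.mp <| by
    simpa [unitVec, hhg] using Subtype.coe_le_coe.mpr ((symm_le_unitVec_iff hφ).mpr hy h)

end FactorProduct

theorem IsBuilding.exists_orderIso (hG : IsBuilding L G) (hX : X ≠ ⊥) :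
    ∃ φ : FactorProduct G X ≃o Set.Icc (⊥ : L) X, ∀ g, (φ (FactorProduct.unitVec g) : L) = g := by
  obtain ⟨φ, hφ⟩ := hG.2 X hX
  exact ⟨φ, fun g => hφ g _ (by simp [FactorProduct.unitVec])
    fun h hh => by simp [FactorProduct.unitVec, hh]⟩

end Product

open FactorProduct

section Nested

variable [PartialOrder L] {G : Set L}

theorem IsNested.subset {S T : Finset L} (hS : IsNested G S) (hTS : T ⊆ S) : IsNested G T :=
  ⟨(Finset.coe_subset.mpr hTS).trans hS.1, fun A hA => hS.2 A (hA.trans hTS)⟩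

theorem isAntichain_filter_maximal (S : Finset L) :
    IsAntichain (· ≤ ·) (↑{x ∈ S | Maximal (· ∈ S) x} : Set L) :=
  (setOfPred_maximal_antichain (· ∈ S)).subset fun _ hx => (Finset.mem_filter.mp hx).2

theorem IsNested.bddAbove [OrderBot L] {S : Finset L} (hS : IsNested G S) :
    BddAbove (S : Set L) := by
  have hub := S.upperBounds_filter_maximal
  set A := {x ∈ S | Maximal (· ∈ S) x}
  rw [BddAbove, ← hub]
  by_cases hA : 2 ≤ A.card
  · obtain ⟨j, hj, -⟩ := hS.2 A (Finset.filter_subset _ S) (isAntichain_filter_maximal S) hA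
    exact ⟨j, hj.1⟩
  · rcases A.eq_empty_or_nonempty with h0 | ⟨m, hm⟩
    · exact ⟨⊥, by simp [h0]⟩
    · exact ⟨m, fun x hx => (Finset.card_le_one.mp (by omega) x hx m hm).le⟩

theorem IsNested.mem_of_isLUB [OrderBot L] {S : Finset L} (hS : IsNested G S) {h : L}
    (hhG : h ∈ G) (hh : h ≠ ⊥) (hSh : IsLUB (S : Set L) h) : h ∈ S := by
  have hub := S.upperBounds_filter_maximal
  set A := {x ∈ S | Maximal (· ∈ S) x}
  have hAh : IsLUB (A : Set L) h := by rwa [IsLUB, hub]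
  by_cases hA : 2 ≤ A.card
  · obtain ⟨j, hj, hjG⟩ := hS.2 A (Finset.filter_subset _ S) (isAntichain_filter_maximal S) hA
    exact absurd (hj.unique hAh ▸ hhG) hjG
  · rcases A.eq_empty_or_nonempty with h0 | ⟨m, hm⟩
    · rw [h0, Finset.coe_empty] at hAh
      exact absurd (hAh.unique isLUB_empty) hh
    · have hAm : A = {m} := Finset.eq_singleton_iff_unique_mem.mpr
        ⟨hm, fun x hx => Finset.card_le_one.mp (by omega) x hx m hm⟩
      rw [hAm, Finset.coe_singleton] at hAh
      exact hAh.unique isLUB_singleton ▸ (Finset.mem_filter.mp hm).1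

end Nested

section Building

variable [SemilatticeInf L] [OrderBot L] {G : Set L} {X : L}

theorem IsBuilding.isLUB_factorsSet (hG : IsBuilding L G) (hX : X ≠ ⊥) :
    IsLUB (factorsSet G X) X := by
  refine ⟨fun g hg => hg.2.1, fun z hz => ?_⟩
  obtain ⟨φ, hφ⟩ := hG.exists_orderIso hX
  let w : Set.Icc (⊥ : L) X := ⟨X ⊓ z, bot_le, inf_le_left⟩
  have hXw : φ.symm ⟨X, bot_le, le_rfl⟩ ≤ φ.symm w := fun g => by
    rw [← Subtype.coe_le_coe, (coe_symm_apply_eq_iff hφ (y := w)).mpr (le_inf g.2.2.1 (hz g.2))]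
    exact (φ.symm _ g).2.2
  exact le_inf_iff.mp (Subtype.coe_le_coe.mpr (φ.symm.le_iff_le.mp hXw)) |>.2

theorem IsBuilding.factorsSet_nonempty (hG : IsBuilding L G) (hX : X ≠ ⊥) :
    (factorsSet G X).Nonempty := by
  refine Set.nonempty_iff_ne_empty.mpr fun h => hX ?_
  have hlub := hG.isLUB_factorsSet hX
  rw [h] at hlub
  exact hlub.unique isLUB_empty

variable [Finite L]

/- In the coordinates given by `φ`, an element below another factor has trivial `h`-coordinate, so
the `h`-coordinate of `X = ⋁ T` is the join of those of the elements of `T` below `h`. -/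
theorem IsBuilding.isLUB_filter_le_of_mem_factorsSet (hG : IsBuilding L G) {T : Set L}
    (hTG : T ⊆ G) (hT : IsLUB T X) {h : L} (hh : h ∈ factorsSet G X) :
    IsLUB {a ∈ T | a ≤ h} h := by
  refine ⟨fun a ha => ha.2, fun z hz => ?_⟩
  obtain ⟨φ, hφ⟩ := hG.exists_orderIso (X := X) fun hX => hG.1 h hh.1 (le_bot_iff.mp (hX ▸ hh.2.1))
  let h' : factorsSet G X := ⟨h, hh⟩
  let z' : Set.Icc (⊥ : L) X := ⟨h ⊓ z, bot_le, inf_le_left.trans hh.2.1⟩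
  let u : FactorProduct G X := Function.update (fun g => ⟨g, bot_le, le_rfl⟩) h' (φ.symm z' h')
  have hub : (φ u : L) ∈ upperBounds T := fun a ha => by
    let a' : Set.Icc (⊥ : L) X := ⟨a, bot_le, hT.1 ha⟩
    suffices φ.symm a' ≤ u from Subtype.coe_le_coe.mpr (φ.symm_apply_le.mp this)
    intro g
    rcases eq_or_ne g h' with rfl | hg
    · simp only [u, Function.update_self]
      by_cases hah : a ≤ h
      · exact φ.symm.monotone (Subtype.coe_le_coe.mp (le_inf hah (hz ⟨ha, hah⟩))) _
      · obtain ⟨k, hk, hak⟩ := exists_mem_factorsSet_ge (hTG ha) (hT.1 ha)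
        have hkh : (⟨k, hk⟩ : factorsSet G X) ≠ h' := fun e =>
          hah (hak.trans_eq (congrArg Subtype.val e))
        rw [← Subtype.coe_le_coe, coe_symm_apply_eq_bot hφ (g := ⟨k, hk⟩) hak hkh.symm]
        exact bot_le
    · simp only [u, Function.update_of_ne hg]
      exact Subtype.coe_le_coe.mp (φ.symm a' g).2.2
  have hXu : φ.symm ⟨X, bot_le, le_rfl⟩ ≤ u :=
    φ.symm_apply_le.mpr (Subtype.coe_le_coe.mp (hT.2 hub))
  have hz' : (φ.symm z' h' : L) = h := by
    refine le_antisymm (φ.symm z' h').2.2 ?_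
    have hXh : (φ.symm ⟨X, bot_le, le_rfl⟩ h' : L) = h := (coe_symm_apply_eq_iff hφ).mpr hh.2.1
    simpa [u, hXh] using Subtype.coe_le_coe.mpr (hXu h')
  exact (le_inf_iff.mp ((coe_symm_apply_eq_iff hφ).mp hz')).2

theorem IsBuilding.factorsSet_eq_maximal (hG : IsBuilding L G) {S : Finset L}
    (hS : IsNested G S) (hX : IsLUB (S : Set L) X) :
    factorsSet G X = {a | Maximal (· ∈ S) a} := by
  have hsub : ∀ h ∈ factorsSet G X, Maximal (· ∈ S) h := by
    intro h hh
    have hmem : h ∈ S.filter (· ≤ h) :=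
      (hS.subset (Finset.filter_subset _ S)).mem_of_isLUB hh.1 (hG.1 h hh.1)
        (by simpa using hG.isLUB_filter_le_of_mem_factorsSet hS.1 hX hh)
    exact ⟨(Finset.mem_filter.mp hmem).1, fun a ha hha => (hh.2.2 a (hS.1 ha) (hX.1 ha) hha).ge⟩
  refine Set.Subset.antisymm hsub fun m hm => ?_
  obtain ⟨h, hh, hmh⟩ := exists_mem_factorsSet_ge (hS.1 hm.prop) (hX.1 hm.prop)
  exact (hm.eq_of_le (hsub h hh).prop hmh) ▸ hh

theorem IsBuilding.exists_mem_factorsSet_forall_lt (hG : IsBuilding L G) {C : Set L}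
    (hC : IsChain (· ≤ ·) C) {M : L} (hM : M ≠ ⊥) :
    ∃ g ∈ factorsSet G M, ∀ Y ∈ C, Y < M → g ∉ factorsSet G Y := by
  by_contra! hcon
  obtain ⟨g0, hg0⟩ := hG.factorsSet_nonempty hM
  obtain ⟨M', ⟨-, hM'M⟩, hM'max⟩ := (hC.mono (Set.sep_subset C (· < M))).exists_isGreatest_of_finite
    (Set.toFinite _) (let ⟨Y, hY, hYM, _⟩ := hcon g0 hg0; ⟨Y, hY, hYM⟩)
  refine hM'M.not_ge ((hG.isLUB_factorsSet hM).2 fun g hg => ?_)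
  obtain ⟨Y, hY, hYM, hgY⟩ := hcon g hg
  exact hgY.2.1.trans (hM'max ⟨hY, hYM⟩)

end Building

theorem isNested_of_forall_mem_factorsSet [SemilatticeInf L] [Finite L] {G : Set L} {C : Set L}
    (hC : IsChain (· ≤ ·) C) {S : Finset L} (hS : ∀ g ∈ S, ∃ X ∈ C, g ∈ factorsSet G X) :
    IsNested G S := by
  refine ⟨fun g hg => (hS g hg).choose_spec.2.1, fun A hAS hA hcard => ?_⟩
  obtain ⟨a0, ha0⟩ : A.Nonempty := Finset.card_pos.mp (by omega)
  obtain ⟨X, ⟨-, b, hbA, hbX⟩, hXmax⟩ :=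
    (hC.mono (Set.sep_subset C fun X => ∃ a ∈ A, a ∈ factorsSet G X)).exists_isGreatest_of_finite
      (Set.toFinite _) (let ⟨Y, hY, hY0⟩ := hS a0 (hAS ha0); ⟨Y, hY, a0, ha0, hY0⟩)
  have hAX : X ∈ upperBounds (A : Set L) := fun a ha => by
    obtain ⟨Y, hY, haY⟩ := hS a (hAS ha)
    exact haY.2.1.trans (hXmax ⟨hY, a, ha, haY⟩)
  obtain ⟨j, hj⟩ := exists_isLUB_of_bddAbove ⟨X, hAX⟩
  -- `b` is maximal in `G` below `X`, so a join in `G` would be `b` itself, inside the antichain `A`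
  refine ⟨j, hj, fun hjG => ?_⟩
  have hbj : b = j := hbX.2.2 j hjG (hj.2 hAX) (hj.1 hbA)
  obtain ⟨a, haA, hab⟩ := A.exists_mem_ne hcard b
  exact hA haA hbA hab ((hj.1 haA).trans hbj.ge)

section Barycenter

variable [PartialOrder L] {G : Set L}

noncomputable def factorBarycenter (G : Set L) (X : L) : L → ℝ :=
  fun g => if g ∈ factorsSet G X then ((factorsSet G X).ncard : ℝ)⁻¹ else 0

theorem factorBarycenter_nonneg (X g : L) : 0 ≤ factorBarycenter G X g := by
  unfold factorBarycenter
  split_ifs <;> positivity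

variable [Finite L]

theorem ncard_factorsSet_pos {X g : L} (hg : g ∈ factorsSet G X) :
    0 < ((factorsSet G X).ncard : ℝ) :=
  Nat.cast_pos.mpr ((Set.ncard_pos (Set.toFinite _)).mpr ⟨g, hg⟩)

theorem factorBarycenter_ne_zero_iff {X g : L} :
    factorBarycenter G X g ≠ 0 ↔ g ∈ factorsSet G X := by
  unfold factorBarycenter
  split_ifs with hg
  · simpa [hg] using (ncard_factorsSet_pos hg).ne'
  · simp [hg]

theorem ncard_mul_factorBarycenter {X g : L} (hg : g ∈ factorsSet G X) :
    ((factorsSet G X).ncard : ℝ) * factorBarycenter G X g = 1 := by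
  rw [factorBarycenter, if_pos hg]
  exact mul_inv_cancel₀ (ncard_factorsSet_pos hg).ne'

end Barycenter

section SubdivisionMap

variable [PartialOrder L] [Fintype L] {G : Set L}

noncomputable def subdivisionMap (G : Set L) : (L → ℝ) →ₗ[ℝ] L → ℝ :=
  Fintype.linearCombination ℝ (factorBarycenter G)

theorem subdivisionMap_apply (f : L → ℝ) (g : L) :
    subdivisionMap G f g = ∑ X, f X * factorBarycenter G X g := by
  simp [subdivisionMap, Fintype.linearCombination_apply, Finset.sum_apply]

theorem subdivisionMap_single (X : L) (a : ℝ) :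
    subdivisionMap G (Pi.single X a) = a • factorBarycenter G X :=
  Fintype.linearCombination_apply_single ℝ _ X a

theorem subdivisionMap_nonneg {f : L → ℝ} (hf : 0 ≤ f) : 0 ≤ subdivisionMap G f := fun g => by
  rw [subdivisionMap_apply]
  exact Finset.sum_nonneg fun X _ => mul_nonneg (hf X) (factorBarycenter_nonneg X g)

theorem subdivisionMap_apply_ne_zero_iff {f : L → ℝ} (hf : 0 ≤ f) {g : L} :
    subdivisionMap G f g ≠ 0 ↔ ∃ X, f X ≠ 0 ∧ g ∈ factorsSet G X := by
  rw [subdivisionMap_apply, Ne, Finset.sum_eq_zero_iff_of_nonneg fun X _ =>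
    mul_nonneg (hf X) (factorBarycenter_nonneg X g)]
  simp [factorBarycenter_ne_zero_iff]

theorem le_subdivisionMap_apply {f : L → ℝ} (hf : 0 ≤ f) {M g : L} (hg : g ∈ factorsSet G M) :
    f M * ((factorsSet G M).ncard : ℝ)⁻¹ ≤ subdivisionMap G f g := by
  rw [subdivisionMap_apply]
  calc f M * _ = f M * factorBarycenter G M g := by rw [factorBarycenter, if_pos hg]
    _ ≤ _ := Finset.single_le_sum (f := fun X => f X * factorBarycenter G X g)
      (fun X _ => mul_nonneg (hf X) (factorBarycenter_nonneg X g)) (Finset.mem_univ M)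

theorem subdivisionMap_apply_of_forall_ne {f : L → ℝ} {M g : L} (hg : g ∈ factorsSet G M)
    (h : ∀ Y, f Y ≠ 0 → Y ≠ M → g ∉ factorsSet G Y) :
    subdivisionMap G f g = f M * ((factorsSet G M).ncard : ℝ)⁻¹ := by
  rw [subdivisionMap_apply, Finset.sum_eq_single M, factorBarycenter, if_pos hg]
  · intro Y _ hYM
    by_cases hY : f Y = 0
    · simp [hY]
    · simp [factorBarycenter, h Y hY hYM]
  · simp

end SubdivisionMap

section SubdivisionMapBuilding

variable [SemilatticeInf L] [OrderBot L] [Fintype L] {G : Set L}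

theorem IsBuilding.sum_factorBarycenter (hG : IsBuilding L G) {X : L} (hX : X ≠ ⊥) :
    ∑ g, factorBarycenter G X g = 1 := by
  obtain ⟨g, hg⟩ := hG.factorsSet_nonempty hX
  simp only [factorBarycenter, ← Set.mem_toFinset, Finset.sum_ite_mem, Finset.univ_inter,
    Finset.sum_const, nsmul_eq_mul, ← Set.ncard_eq_toFinset_card']
  exact mul_inv_cancel₀ (ncard_factorsSet_pos hg).ne'

theorem IsBuilding.sum_subdivisionMap (hG : IsBuilding L G) {f : L → ℝ} (hf : f ⊥ = 0) :
    ∑ g, subdivisionMap G f g = ∑ X, f X := by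
  simp only [subdivisionMap_apply]
  rw [Finset.sum_comm]
  refine Finset.sum_congr rfl fun X _ => ?_
  rcases eq_or_ne X ⊥ with rfl | hX
  · simp [hf]
  · rw [← Finset.mul_sum, hG.sum_factorBarycenter hX, mul_one]

theorem IsBuilding.eq_zero_of_subdivisionMap_eq_zero (hG : IsBuilding L G) {f : L → ℝ}
    (hf : 0 ≤ f) (hbot : f ⊥ = 0) (h : subdivisionMap G f = 0) : f = 0 :=
  (Fintype.sum_eq_zero_iff_of_nonneg hf).mp (by simp [← hG.sum_subdivisionMap hbot, h])

theorem IsBuilding.isLeast_image_factorsSet (hG : IsBuilding L G) {f : L → ℝ} (hf : 0 ≤ f)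
    (hC : IsChain (· ≤ ·) (support f)) {M : L} (hM : IsGreatest (support f) M)
    (hMbot : M ≠ ⊥) :
    IsLeast (subdivisionMap G f '' factorsSet G M) (f M * ((factorsSet G M).ncard : ℝ)⁻¹) := by
  obtain ⟨g, hg, hpriv⟩ := hG.exists_mem_factorsSet_forall_lt hC hMbot
  refine ⟨⟨g, hg, subdivisionMap_apply_of_forall_ne hg fun Y hY hYM =>
    hpriv Y hY ((hM.2 hY).lt_of_ne hYM)⟩, ?_⟩
  rintro _ ⟨g', hg', rfl⟩
  exact le_subdivisionMap_apply hf hg'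

theorem IsBuilding.isLUB_support_subdivisionMap (hG : IsBuilding L G) {f : L → ℝ} (hf : 0 ≤ f)
    {M : L} (hM : IsGreatest (support f) M) (hMbot : M ≠ ⊥) :
    IsLUB (support (subdivisionMap G f)) M := by
  refine ⟨fun g hg => ?_, fun z hz => (hG.isLUB_factorsSet hMbot).2 fun g hg => hz ?_⟩
  · obtain ⟨X, hX, hgX⟩ := (subdivisionMap_apply_ne_zero_iff hf).mp hg
    exact hgX.2.1.trans (hM.2 hX)
  · exact (subdivisionMap_apply_ne_zero_iff hf).mpr ⟨M, hM.1, hg⟩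

end SubdivisionMapBuilding

theorem sub_single_self_apply {α M : Type*} [DecidableEq α] [AddGroup M] (f : α → M) (a x : α) :
    (f - Pi.single a (f a) : α → M) x = if x = a then 0 else f x := by
  rcases eq_or_ne x a with rfl | hx <;> simp [*]

theorem support_sub_single_self {α M : Type*} [DecidableEq α] [AddGroup M] (f : α → M) (a : α) :
    support (f - Pi.single a (f a)) = support f \ {a} := by
  ext x
  rw [Function.mem_support, sub_single_self_apply]
  split_ifs with hx <;> simp [hx]

section FaceWeight

variable {V : Type*} [Fintype V] {K : Set (Finset V)}

def IsFaceWeight (K : Set (Finset V)) (f : V → ℝ) : Prop :=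
  0 ≤ f ∧ (support f).toFinset ∈ K

theorem IsFaceWeight.mono (hK : IsLowerSet K) {f g : V → ℝ} (hf : IsFaceWeight K f) (hg : 0 ≤ g)
    (hgf : support g ⊆ support f) : IsFaceWeight K g :=
  ⟨hg, hK (Set.toFinset_subset_toFinset.mpr hgf) hf.2⟩

theorem isFaceWeight_and_sum_eq_one_iff (hK : IsLowerSet K) {f : V → ℝ} :
    IsFaceWeight K f ∧ ∑ v, f v = 1 ↔
      (∀ v, 0 ≤ f v) ∧ ∃ s ∈ K, (∀ v, f v ≠ 0 → v ∈ s) ∧ ∑ v ∈ s, f v = 1 := by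
  have hsum {s : Finset V} (hs : ∀ v, f v ≠ 0 → v ∈ s) : ∑ v ∈ s, f v = ∑ v, f v :=
    Finset.sum_subset (Finset.subset_univ s) fun v _ hv => not_not.mp (mt (hs v) hv)
  refine ⟨fun ⟨⟨hf0, hfK⟩, hf1⟩ => ⟨hf0, _, hfK, fun v hv => by simpa using hv, ?_⟩,
    fun ⟨hf0, s, hsK, hs, hs1⟩ => ⟨⟨hf0, hK (fun v hv => hs v (by simpa using hv)) hsK⟩, ?_⟩⟩
  · rwa [hsum fun v hv => by simpa using hv]
  · rwa [← hsum hs]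

theorem IsFaceWeight.sub_single_self [DecidableEq V] (hK : IsLowerSet K) {f : V → ℝ}
    (hf : IsFaceWeight K f) (a : V) : IsFaceWeight K (f - Pi.single a (f a)) := by
  refine hf.mono hK (fun x => ?_) (by simp [support_sub_single_self])
  rw [sub_single_self_apply]
  split_ifs
  exacts [le_rfl, hf.1 x]

theorem isCompact_setOf_isFaceWeight (hK : IsLowerSet K) :
    IsCompact {f : V → ℝ | IsFaceWeight K f ∧ ∑ v, f v = 1} := by
  have hunion : {f : V → ℝ | IsFaceWeight K f ∧ ∑ v, f v = 1} =
      ⋃ s ∈ K, stdSimplex ℝ V ∩ ⋂ v ∈ (s : Set V)ᶜ, {f | f v = 0} := by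
    ext f
    simp only [Set.mem_iUnion, Set.mem_inter_iff, Set.mem_iInter, Set.mem_compl_iff,
      Finset.mem_coe]
    constructor
    · rintro ⟨⟨hf0, hfK⟩, hf1⟩
      exact ⟨_, hfK, ⟨hf0, hf1⟩, fun v hv => by simpa using hv⟩
    · rintro ⟨s, hsK, ⟨hf0, hf1⟩, hs⟩
      exact ⟨⟨hf0, hK (fun v hv => not_not.mp fun h => Set.mem_toFinset.mp hv (hs v h)) hsK⟩, hf1⟩
  rw [hunion]
  exact (Set.toFinite K).isCompact_biUnion fun s _ => (isCompact_stdSimplex ℝ V).inter_right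
    (isClosed_biInter fun v _ => isClosed_eq (continuous_apply v) continuous_const)

end FaceWeight

theorem isLowerSet_orderComplexBot [PartialOrder L] [OrderBot L] :
    IsLowerSet (orderComplexBot L) :=
  fun _ _ hts hs => ⟨(Finset.coe_subset.mpr hts).trans hs.1, hs.2.mono (Finset.coe_subset.mpr hts)⟩

theorem isLowerSet_nestedComplex [PartialOrder L] {G : Set L} : IsLowerSet (nestedComplex G) :=
  fun _ _ hts hs => IsNested.subset hs hts

theorem isFaceWeight_orderComplexBot_iff [PartialOrder L] [OrderBot L] [Fintype L] {f : L → ℝ} :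
    IsFaceWeight (orderComplexBot L) f ↔ 0 ≤ f ∧ f ⊥ = 0 ∧ IsChain (· ≤ ·) (support f) := by
  simp only [IsFaceWeight, orderComplexBot, Set.mem_ofPred_eq, Set.coe_toFinset]
  exact and_congr_right' (and_congr_left'
    ⟨fun h => by_contra fun hb => h hb rfl, fun h x hx hxb => hx (hxb ▸ h)⟩)

section Bijection

variable [SemilatticeInf L] [OrderBot L] [Fintype L] {G : Set L}

theorem isFaceWeight_subdivisionMap {f : L → ℝ} (hf : IsFaceWeight (orderComplexBot L) f) :
    IsFaceWeight (nestedComplex G) (subdivisionMap G f) := by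
  obtain ⟨hf0, -, hC⟩ := isFaceWeight_orderComplexBot_iff.mp hf
  exact ⟨subdivisionMap_nonneg hf0, isNested_of_forall_mem_factorsSet hC fun g hg =>
    (subdivisionMap_apply_ne_zero_iff hf0).mp (by simpa using hg)⟩

theorem IsBuilding.injOn_subdivisionMap (hG : IsBuilding L G) :
    Set.InjOn (subdivisionMap G) {f | IsFaceWeight (orderComplexBot L) f} := by
  intro f hf f' hf' heq
  induction hn : (support f).ncard using Nat.strong_induction_on generalizing f f' with
  | _ n ih =>
  obtain ⟨hf0, hfbot, hfC⟩ := isFaceWeight_orderComplexBot_iff.mp hf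
  obtain ⟨hf'0, hf'bot, hf'C⟩ := isFaceWeight_orderComplexBot_iff.mp hf'
  rcases eq_or_ne f 0 with rfl | hne
  · exact (hG.eq_zero_of_subdivisionMap_eq_zero hf'0 hf'bot (by rw [← heq, map_zero])).symm
  have hne' : f' ≠ 0 := fun h => hne (hG.eq_zero_of_subdivisionMap_eq_zero hf0 hfbot
    (by rw [heq, h, map_zero]))
  obtain ⟨M, hM⟩ := hfC.exists_isGreatest_of_finite (Set.toFinite _)
    (support_nonempty_iff.mpr hne)
  obtain ⟨M', hM'⟩ := hf'C.exists_isGreatest_of_finite (Set.toFinite _)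
    (support_nonempty_iff.mpr hne')
  have hMbot : M ≠ ⊥ := fun h => hM.1 (h ▸ hfbot)
  have hM'bot : M' ≠ ⊥ := fun h => hM'.1 (h ▸ hf'bot)
  obtain rfl : M = M' := (hG.isLUB_support_subdivisionMap hf0 hM hMbot).unique
    (heq ▸ hG.isLUB_support_subdivisionMap hf'0 hM' hM'bot)
  have htop : f M = f' M := by
    obtain ⟨g, hg⟩ := hG.factorsSet_nonempty hMbot
    refine mul_right_cancel₀ (inv_ne_zero (ncard_factorsSet_pos hg).ne') ?_
    exact (hG.isLeast_image_factorsSet hf0 hfC hM hMbot).unique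
      (heq ▸ hG.isLeast_image_factorsSet hf'0 hf'C hM' hMbot)
  have hrest : f - Pi.single M (f M) = f' - Pi.single M (f' M) := by
    refine ih _ ?_ ?_ ?_ ?_ rfl
    · rw [← hn, support_sub_single_self]
      exact Set.ncard_sdiff_singleton_lt_of_mem hM.1
    · exact hf.sub_single_self isLowerSet_orderComplexBot M
    · exact hf'.sub_single_self isLowerSet_orderComplexBot M
    · rw [map_sub, map_sub, subdivisionMap_single, subdivisionMap_single, heq, htop]
  rw [← sub_add_cancel f (Pi.single M (f M)), hrest, htop, sub_add_cancel]

theorem IsBuilding.exists_isLUB_sub_factorBarycenter (hG : IsBuilding L G) {c : L → ℝ}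
    (hc : IsFaceWeight (nestedComplex G) c) (hne : c ≠ 0) :
    ∃ X, IsLUB (support c) X ∧ X ≠ ⊥ ∧ ∃ t : ℝ, 0 ≤ t ∧
      IsFaceWeight (nestedComplex G) (c - t • factorBarycenter G X) ∧
      support (c - t • factorBarycenter G X) ⊂ support c := by
  obtain ⟨hc0, hcN⟩ := hc
  obtain ⟨X, hX⟩ := exists_isLUB_of_bddAbove hcN.bddAbove
  have hFX : factorsSet G X ⊆ support c := by
    rw [hG.factorsSet_eq_maximal hcN hX]
    exact fun m hm => by simpa using hm.prop
  rw [Set.coe_toFinset] at hX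
  obtain ⟨a, ha⟩ := support_nonempty_iff.mpr hne
  have hXbot : X ≠ ⊥ := fun h =>
    hG.1 a (hcN.1 (by simpa using ha)) (le_bot_iff.mp (h ▸ hX.1 ha))
  obtain ⟨g0, hg0, hmin⟩ := (factorsSet G X).toFinset.exists_min_image c
    (Set.toFinset_nonempty.mpr (hG.factorsSet_nonempty hXbot))
  rw [Set.mem_toFinset] at hg0
  set t := c g0 * (factorsSet G X).ncard
  have happly (v : L) : (c - t • factorBarycenter G X) v =
      if v ∈ factorsSet G X then c v - c g0 else c v := by
    split_ifs with hv
    · simp [t, mul_assoc, ncard_mul_factorBarycenter hv]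
    · simp [factorBarycenter, hv]
  have hnonneg : 0 ≤ c - t • factorBarycenter G X := fun v => by
    rw [happly]
    split_ifs with hv
    exacts [sub_nonneg.mpr (hmin v (Set.mem_toFinset.mpr hv)), hc0 v]
  have hsub : support (c - t • factorBarycenter G X) ⊆ support c := fun v hv => by
    rw [Function.mem_support, happly] at hv
    split_ifs at hv with hvF
    exacts [hFX hvF, hv]
  refine ⟨X, hX, hXbot, t, mul_nonneg (hc0 g0) (Nat.cast_nonneg _),
    IsFaceWeight.mono isLowerSet_nestedComplex ⟨hc0, hcN⟩ hnonneg hsub,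
    (Set.ssubset_iff_of_subset hsub).mpr ⟨g0, hFX hg0, ?_⟩⟩
  simp [happly, hg0]

theorem IsBuilding.exists_subdivisionMap_eq (hG : IsBuilding L G) {c : L → ℝ}
    (hc : IsFaceWeight (nestedComplex G) c) :
    ∃ f, IsFaceWeight (orderComplexBot L) f ∧ subdivisionMap G f = c ∧
      ∀ Y ∈ support f, ∀ u ∈ upperBounds (support c), Y ≤ u := by
  -- the bound on the support keeps the new top vertex above the chain built for the remainder
  induction hn : (support c).ncard using Nat.strong_induction_on generalizing c with
  | _ n ih =>
  rcases eq_or_ne c 0 with rfl | hne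
  · exact ⟨0, isFaceWeight_orderComplexBot_iff.mpr ⟨le_rfl, rfl, by simp⟩, map_zero _, by simp⟩
  obtain ⟨X, hX, hXbot, t, ht, hc', hlt⟩ := hG.exists_isLUB_sub_factorBarycenter hc hne
  obtain ⟨f, hf, hfc, hfub⟩ := ih _ (hn ▸ Set.ncard_lt_ncard hlt) hc' rfl
  obtain ⟨hf0, hfbot, hfC⟩ := isFaceWeight_orderComplexBot_iff.mp hf
  have hsupp : support (f + Pi.single X t) ⊆ insert X (support f) :=
    (support_add _ _).trans
      (Set.union_subset (Set.subset_insert _ _) (Pi.support_single_subset.trans (by simp)))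
  refine ⟨f + Pi.single X t, isFaceWeight_orderComplexBot_iff.mpr ⟨?_, ?_, ?_⟩, ?_, ?_⟩
  · exact add_nonneg hf0 (Pi.single_nonneg.mpr ht)
  · simp [hfbot, hXbot.symm]
  · refine (hfC.insert fun Y hY _ => Or.inr ?_).mono hsupp
    exact hfub Y hY X (upperBounds_mono_set hlt.subset hX.1)
  · rw [map_add, hfc, subdivisionMap_single, sub_add_cancel]
  · intro Y hY u hu
    rcases hsupp hY with rfl | hY
    · exact hX.2 hu
    · exact hfub Y hY u (upperBounds_mono_set hlt.subset hu)

theorem IsBuilding.bijOn_subdivisionMap (hG : IsBuilding L G) :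
    Set.BijOn (subdivisionMap G) {f | IsFaceWeight (orderComplexBot L) f ∧ ∑ v, f v = 1}
      {c | IsFaceWeight (nestedComplex G) c ∧ ∑ v, c v = 1} := by
  have hsum {f : L → ℝ} (hf : IsFaceWeight (orderComplexBot L) f) :
      ∑ v, subdivisionMap G f v = ∑ v, f v :=
    hG.sum_subdivisionMap (isFaceWeight_orderComplexBot_iff.mp hf).2.1
  refine ⟨fun f ⟨hf, hf1⟩ => ⟨isFaceWeight_subdivisionMap hf, (hsum hf).trans hf1⟩,
    hG.injOn_subdivisionMap.mono fun f hf => hf.1, fun c ⟨hc, hc1⟩ => ?_⟩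
  obtain ⟨f, hf, rfl, -⟩ := hG.exists_subdivisionMap_eq hc
  exact ⟨f, ⟨hf, (hsum hf).symm.trans hc1⟩, rfl⟩

end Bijection

theorem stmt18_general (L : Type*) [SemilatticeInf L] [OrderBot L] [Fintype L]
    (G : Set L) (hG : IsBuilding L G) :
    Nonempty (geomReal (nestedComplex G) ≃ₜ geomReal (orderComplexBot L)) := by
  let e := hG.bijOn_subdivisionMap.equiv (subdivisionMap G)
  have he : Continuous e :=
    ((subdivisionMap G).continuous_of_finiteDimensional.comp continuous_subtype_val).subtype_mk _
  have : CompactSpace {f : L → ℝ | IsFaceWeight (orderComplexBot L) f ∧ ∑ v, f v = 1} :=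
    isCompact_iff_compactSpace.mp (isCompact_setOf_isFaceWeight isLowerSet_orderComplexBot)
  exact ⟨(Homeomorph.subtype (.refl _) fun _ =>
      isFaceWeight_and_sum_eq_one_iff isLowerSet_nestedComplex).symm.trans <|
    he.homeoOfEquivCompactToT2.symm.trans <| Homeomorph.subtype (.refl _) fun _ =>
      isFaceWeight_and_sum_eq_one_iff isLowerSet_orderComplexBot⟩

/-- For a finite atomic meet-semilattice `L` and building set `G`,
the nested set complex `N(L,G)` is homeomorphic to the order complex
`Δ(L \ {⊥})`. -/
theorem stmt18 (L : Type*) [SemilatticeInf L] [OrderBot L] [Fintype L]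
    (hAtomic : ∀ X : L, IsLUB {a : L | IsAtom a ∧ a ≤ X} X)
    (G : Set L) (hG : IsBuilding L G) :
    Nonempty (geomReal (nestedComplex G) ≃ₜ geomReal (orderComplexBot L)) :=
  stmt18_general L G hG
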